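/- arXiv:2012.14401 — 7 statements merged into one kernel-verified Lean document; each statement's English description precedes it below -/
import Mathlib

section
/- Let H be a complex Hilbert space and L ⊆ H a closed real-linear subspace; let L' := {g ∈ H : Im⟪f,g⟫ = 0 for all f ∈ L} be its symplectic complement, L∞ := L ∩ iL, and La := L ∩ L'. Then: (i) La is orthogonal to L∞ with respect to the full complex inner product, i.e. ⟪f,g⟫ = 0 for all f ∈ La, g ∈ L∞; (ii) La is orthogonal to iLa with respect to the real inner product Re⟪·,·⟫; consequently La + iLa is a closed real subspace of H equal to the orthogonal direct sum La ⊕ iLa. -/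
open scoped Pointwise
attribute [local instance] InnerProductSpace.complexToReal

/-- The symplectic complement of a set `L` in a complex Hilbert space:
all `g` with `Im⟪f,g⟫ = 0` for every `f ∈ L`. -/
def sympComplementSet {H : Type*} [NormedAddCommGroup H] [InnerProductSpace ℂ H]
    (L : Set H) : Set H :=
  {g | ∀ f ∈ L, (inner ℂ f g : ℂ).im = 0}

/-!
If `f ∈ La` and `g ∈ L`, then `⟪f,g⟫` is real. For `g ∈ L ∩ iL` the number `⟪f,g⟫ = i⟪f,-ig⟫` is
also purely imaginary, hence zero; for `g ∈ La` the number `⟪f,ig⟫ = i⟪f,g⟫` is purely imaginary,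
so `La ⟂ iLa` in the real inner product. `La` is closed, so it has an orthogonal projection `P`,
and `La + iLa` is the preimage of the closed set `iLa` under the continuous map `x ↦ x - Px`.
-/

namespace Submodule

variable {𝕜 E : Type*} [RCLike 𝕜] [NormedAddCommGroup E] [InnerProductSpace 𝕜 E]

theorem IsOrtho.sup_eq_preimage_sub_starProjection {K K' : Submodule 𝕜 E}
    [K.HasOrthogonalProjection] (h : K ⟂ K') :
    ((K ⊔ K' : Submodule 𝕜 E) : Set E) = (fun x ↦ x - K.starProjection x) ⁻¹' K' := by
  ext x
  simp only [SetLike.mem_coe, Set.mem_preimage, mem_sup]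
  constructor
  · rintro ⟨a, ha, b, hb, rfl⟩
    rwa [K.eq_starProjection_of_mem_orthogonal' ha (h.ge hb) rfl, add_sub_cancel_left]
  · exact fun hx ↦ ⟨_, K.starProjection_apply_mem x, _, hx, add_sub_cancel _ _⟩

theorem IsOrtho.isClosed_sup {K K' : Submodule 𝕜 E} [K.HasOrthogonalProjection] (h : K ⟂ K')
    (hK' : IsClosed (K' : Set E)) : IsClosed ((K ⊔ K' : Submodule 𝕜 E) : Set E) := by
  rw [h.sup_eq_preimage_sub_starProjection]
  exact hK'.preimage (continuous_id.sub K.starProjection.continuous)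

end Submodule

section Symplectic

variable {H : Type*} [NormedAddCommGroup H] [InnerProductSpace ℂ H]

theorem im_inner_eq_zero_of_mem_sympComplementSet {S : Set H} {f g : H}
    (hf : f ∈ sympComplementSet S) (hg : g ∈ S) : (inner ℂ f g).im = 0 := by
  rw [← inner_conj_symm, Complex.conj_im, hf g hg, neg_zero]

theorem inner_eq_zero_of_mem_sympComplementSet {S : Set H} {f g : H}
    (hf : f ∈ sympComplementSet S) (hg : g ∈ S ∩ Complex.I • S) : inner ℂ f g = 0 := by
  obtain ⟨hgS, h, hh, rfl⟩ := hg
  have hreal := im_inner_eq_zero_of_mem_sympComplementSet hf hh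
  apply Complex.ext
  · simp [hreal]
  · exact im_inner_eq_zero_of_mem_sympComplementSet hf hgS

theorem re_inner_I_smul_eq_zero_of_mem_sympComplementSet {S : Set H} {f g : H}
    (hf : f ∈ sympComplementSet S) (hg : g ∈ S) : (inner ℂ f (Complex.I • g)).re = 0 := by
  simp [im_inner_eq_zero_of_mem_sympComplementSet hf hg]

theorem isClosed_sympComplementSet (S : Set H) : IsClosed (sympComplementSet S) := by
  simp only [sympComplementSet, Set.ofPred_forall]
  exact isClosed_biInter fun f _ ↦
    isClosed_eq (Complex.continuous_im.comp (continuous_const.inner continuous_id))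
      continuous_const

noncomputable def sympComplement (S : Set H) : Submodule ℝ H where
  carrier := sympComplementSet S
  add_mem' {a b} ha hb f hf := by
    rw [inner_add_right, Complex.add_im, ha f hf, hb f hf, add_zero]
  zero_mem' f _ := by simp
  smul_mem' c x hx f hf := by
    rw [← Complex.coe_smul, inner_smul_right, Complex.im_ofReal_mul, hx f hf, mul_zero]

theorem coe_sup_I_smul (K : Submodule ℝ H) :
    ((K ⊔ Complex.I • K : Submodule ℝ H) : Set H) =
      {x | ∃ a ∈ (K : Set H), ∃ b ∈ (K : Set H), x = a + Complex.I • b} := by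
  ext x
  simp only [SetLike.mem_coe, Submodule.mem_sup, Submodule.mem_smul_pointwise_iff_exists,
    Set.mem_ofPred_eq]
  constructor
  · rintro ⟨a, ha, _, ⟨b, hb, rfl⟩, rfl⟩
    exact ⟨a, ha, b, hb, rfl⟩
  · rintro ⟨a, ha, b, hb, rfl⟩
    exact ⟨a, ha, _, ⟨b, hb, rfl⟩, rfl⟩

noncomputable def abelianPart (L : Submodule ℝ H) : Submodule ℝ H := L ⊓ sympComplement L

theorem coe_abelianPart (L : Submodule ℝ H) :
    (abelianPart L : Set H) = (L : Set H) ∩ sympComplementSet L := rfl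

theorem isClosed_abelianPart {L : Submodule ℝ H} (hL : IsClosed (L : Set H)) :
    IsClosed (abelianPart L : Set H) :=
  hL.inter (isClosed_sympComplementSet _)

theorem isOrtho_abelianPart_I_smul (L : Submodule ℝ H) :
    abelianPart L ⟂ Complex.I • abelianPart L := by
  rw [Submodule.isOrtho_iff_inner_eq]
  rintro f hf _ ⟨g, hg, rfl⟩
  rw [real_inner_eq_re_inner ℂ]
  exact re_inner_I_smul_eq_zero_of_mem_sympComplementSet hf.2 hg.1

end Symplectic

/-- For a closed real-linear subspace `L` of a complex Hilbert space `H`, with symplectic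
complement `L'`, nonseparating part `L∞ = L ∩ iL` and abelian part `La = L ∩ L'`:
(i) `La` is orthogonal to `L∞` for the full complex inner product; (ii) `La` is orthogonal to
`iLa` for the real inner product `Re⟪·,·⟫`; consequently `La + iLa` is a closed real subspace
of `H` (equal to the orthogonal direct sum `La ⊕ iLa`). -/
theorem abelian_part_orthogonality
    {H : Type*} [NormedAddCommGroup H] [InnerProductSpace ℂ H] [CompleteSpace H]
    (L : Submodule ℝ H) (hL : IsClosed (L : Set H)) :
    (∀ f ∈ (L : Set H) ∩ sympComplementSet (L : Set H),
      ∀ g ∈ (L : Set H) ∩ (Complex.I • (L : Set H)), (inner ℂ f g : ℂ) = 0) ∧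
    (∀ f ∈ (L : Set H) ∩ sympComplementSet (L : Set H),
      ∀ g ∈ (L : Set H) ∩ sympComplementSet (L : Set H),
        (inner ℂ f (Complex.I • g) : ℂ).re = 0) ∧
    IsClosed {x : H | ∃ a ∈ (L : Set H) ∩ sympComplementSet (L : Set H),
      ∃ b ∈ (L : Set H) ∩ sympComplementSet (L : Set H), x = a + Complex.I • b} := by
  refine ⟨fun f hf g hg ↦ inner_eq_zero_of_mem_sympComplementSet hf.2 hg,
    fun f hf g hg ↦ re_inner_I_smul_eq_zero_of_mem_sympComplementSet hf.2 hg.1, ?_⟩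
  have : CompleteSpace (abelianPart L) := (isClosed_abelianPart hL).completeSpace_coe
  rw [← coe_abelianPart, ← coe_sup_I_smul]
  refine (isOrtho_abelianPart_I_smul L).isClosed_sup ?_
  rw [Submodule.coe_pointwise_smul]
  exact (isClosed_abelianPart hL).smul_of_ne_zero Complex.I_ne_zero
end

section
/- Decomposition of a closed real subspace: let H be a complex Hilbert space and L ⊆ H a closed real-linear subspace. Define L' := {g ∈ H : Im⟪f,g⟫ = 0 for all f ∈ L}, L₀ := the orthogonal complement of the closure of L + iL, L∞ := L ∩ iL, La := L ∩ L', La⊕ := La + iLa, Lf⊕ := the orthogonal complement (in H, with respect to Re⟪·,·⟫) of L₀ ⊕ La⊕ ⊕ L∞, and Lf := Lf⊕ ∩ L. Then H is the internal orthogonal direct sum H = L₀ ⊕ La⊕ ⊕ Lf⊕ ⊕ L∞, and under this decomposition L = La ⊕ Lf ⊕ L∞ (i.e. every element of L is uniquely a sum of elements of La, Lf and L∞, with zero component in L₀). -/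
attribute [local instance] InnerProductSpace.complexToReal

variable {H : Type*} [NormedAddCommGroup H] [InnerProductSpace ℂ H]

/-- Multiplication by `i`, as a real-linear map on a complex Hilbert space. -/
noncomputable def mulI : H →ₗ[ℝ] H where
  toFun x := Complex.I • x
  map_add' x y := by simp [smul_add]
  map_smul' r x := smul_comm Complex.I r x

/-- The symplectic complement `L' = {g | Im⟪f,g⟫ = 0 ∀ f ∈ L}` of a real subspace `L`,
as a real subspace. -/
noncomputable def sympCompl (L : Submodule ℝ H) : Submodule ℝ H where
  carrier := {g | ∀ f ∈ L, (inner ℂ f g : ℂ).im = 0}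
  add_mem' := by
    intro a b ha hb f hf
    rw [inner_add_right]
    simp [ha f hf, hb f hf]
  zero_mem' := by
    intro f hf
    simp
  smul_mem' := by
    intro r g hg f hf
    rw [RCLike.real_smul_eq_coe_smul (K := ℂ), inner_smul_right]
    simp [Complex.mul_im, hg f hf]

/-- The nonseparating part `L∞ = L ∩ iL`. -/
noncomputable def nonsepPart (L : Submodule ℝ H) : Submodule ℝ H :=
  L ⊓ L.map mulI

/-- The abelian part `La = L ∩ L'`. -/
noncomputable def abelPart (L : Submodule ℝ H) : Submodule ℝ H :=
  L ⊓ sympCompl L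

/-- `La⊕ = La + iLa`. -/
noncomputable def abelPartC (L : Submodule ℝ H) : Submodule ℝ H :=
  abelPart L ⊔ (abelPart L).map mulI

/-- `L₀ = (closure of (L + iL))ᗮ`, orthogonal complement w.r.t. the real inner product. -/
noncomputable def zeroPart (L : Submodule ℝ H) : Submodule ℝ H :=
  ((L ⊔ L.map mulI).topologicalClosure)ᗮ

/-- `Lf⊕ = (L₀ ⊕ La⊕ ⊕ L∞)ᗮ`. -/
noncomputable def factPartC (L : Submodule ℝ H) : Submodule ℝ H :=
  (zeroPart L ⊔ abelPartC L ⊔ nonsepPart L)ᗮ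

/-- The factorial part `Lf = Lf⊕ ∩ L`. -/
noncomputable def factPart (L : Submodule ℝ H) : Submodule ℝ H :=
  factPartC L ⊓ L

/-! The identity `⟪i f, g⟫_ℝ = Im ⟪f, g⟫` turns the symplectic complement into a real orthogonal
complement, `L' = (iL)ᗮ`. Hence `La ⟂ iL ⊇ L∞`, `iLa ⟂ L` and `L₀ ⟂ L + iL`, so `L₀`, `La⊕` and
`L∞` are mutually orthogonal closed subspaces; their sum then admits an orthogonal projection,
and `Lf⊕` is its complement. Inside `L`, splitting off first `L∞` and then `La` by orthogonal
projection leaves `L ∩ Laᗮ ∩ L∞ᗮ`, which is orthogonal to `L₀`, `La⊕` and `L∞`, hence lies in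
`Lf`. -/

namespace Submodule

variable {𝕜 E : Type*} [RCLike 𝕜] [NormedAddCommGroup E] [InnerProductSpace 𝕜 E]

theorem IsOrtho.hasOrthogonalProjection_sup {U V : Submodule 𝕜 E} [U.HasOrthogonalProjection]
    [V.HasOrthogonalProjection] (h : U ⟂ V) : (U ⊔ V).HasOrthogonalProjection := by
  refine ⟨fun v => ?_⟩
  obtain ⟨u, hu, hvu⟩ := HasOrthogonalProjection.exists_orthogonal (K := U) v
  obtain ⟨w, hw, hvuw⟩ := HasOrthogonalProjection.exists_orthogonal (K := V) (v - u)
  refine ⟨u + w, add_mem_sup hu hw, ?_⟩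
  rw [← inf_orthogonal, sub_add_eq_sub_sub]
  exact ⟨sub_mem hvu (h.ge hw), hvuw⟩

end Submodule

@[simp]
lemma mulI_apply (x : H) : mulI x = Complex.I • x := rfl

lemma mulI_mulI (x : H) : mulI (mulI x) = -x := by
  simp [smul_smul]

lemma continuous_mulI : Continuous (mulI : H → H) :=
  continuous_const_smul Complex.I

lemma real_inner_mulI_left (x y : H) : inner ℝ (mulI x) y = (inner ℂ x y).im := by
  simp [real_inner_eq_re_inner ℂ, inner_smul_left]

lemma map_mulI_eq_comap (S : Submodule ℝ H) : S.map mulI = S.comap mulI := by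
  ext x
  constructor
  · rintro ⟨y, hy, rfl⟩
    rw [Submodule.mem_comap, mulI_mulI]
    exact S.neg_mem hy
  · intro hx
    exact ⟨-mulI x, S.neg_mem hx, by rw [map_neg, mulI_mulI, neg_neg]⟩

lemma isClosed_map_mulI {S : Submodule ℝ H} (hS : IsClosed (S : Set H)) :
    IsClosed ((S.map mulI : Submodule ℝ H) : Set H) := by
  rw [map_mulI_eq_comap]
  exact hS.preimage continuous_mulI

lemma sympCompl_eq_orthogonal_map_mulI (L : Submodule ℝ H) :
    sympCompl L = (L.map mulI)ᗮ := by
  ext g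
  simp only [Submodule.mem_orthogonal, Submodule.mem_map, forall_exists_index, and_imp,
    forall_apply_eq_imp_iff₂, real_inner_mulI_left]
  rfl

lemma le_sympCompl_comm {S T : Submodule ℝ H} : S ≤ sympCompl T ↔ T ≤ sympCompl S := by
  suffices ∀ S T : Submodule ℝ H, S ≤ sympCompl T → T ≤ sympCompl S from ⟨this S T, this T S⟩
  intro S T h t ht s hs
  rw [← inner_conj_symm, Complex.conj_im, h hs t ht, neg_zero]

section parts

variable (L : Submodule ℝ H)

lemma abelPart_le : abelPart L ≤ L := inf_le_left

lemma nonsepPart_le : nonsepPart L ≤ L := inf_le_left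

lemma abelPartC_le_sup_map_mulI : abelPartC L ≤ L ⊔ L.map mulI :=
  sup_le_sup (abelPart_le L) (Submodule.map_mono (abelPart_le L))

lemma abelPart_le_orthogonal_map_mulI : abelPart L ≤ (L.map mulI)ᗮ :=
  inf_le_right.trans (sympCompl_eq_orthogonal_map_mulI L).le

lemma map_mulI_abelPart_isOrtho : (abelPart L).map mulI ⟂ L := by
  rw [Submodule.isOrtho_comm, Submodule.isOrtho_iff_le, ← sympCompl_eq_orthogonal_map_mulI,
    le_sympCompl_comm]
  exact inf_le_right

lemma abelPart_isOrtho_nonsepPart : abelPart L ⟂ nonsepPart L :=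
  Submodule.isOrtho_iff_le.mpr
    ((abelPart_le_orthogonal_map_mulI L).trans (Submodule.orthogonal_le inf_le_right))

lemma abelPartC_isOrtho_nonsepPart : abelPartC L ⟂ nonsepPart L :=
  Submodule.isOrtho_sup_left.mpr
    ⟨abelPart_isOrtho_nonsepPart L, (map_mulI_abelPart_isOrtho L).mono_right (nonsepPart_le L)⟩

lemma zeroPart_isOrtho {K : Submodule ℝ H} (hK : K ≤ L ⊔ L.map mulI) : zeroPart L ⟂ K :=
  (Submodule.isOrtho_orthogonal_left _).mono_right (hK.trans (Submodule.le_topologicalClosure _))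

lemma isOrtho_factPartC : zeroPart L ⊔ abelPartC L ⊔ nonsepPart L ⟂ factPartC L :=
  Submodule.isOrtho_orthogonal_right _

lemma inf_orthogonal_le_factPart :
    (abelPart L)ᗮ ⊓ ((nonsepPart L)ᗮ ⊓ L) ≤ factPart L := by
  rintro z ⟨hzLa, hzN, hzL⟩
  refine ⟨?_, hzL⟩
  rw [factPartC, ← Submodule.inf_orthogonal, ← Submodule.inf_orthogonal, abelPartC,
    ← Submodule.inf_orthogonal]
  exact ⟨⟨(zeroPart_isOrtho L le_sup_left).ge hzL, hzLa, (map_mulI_abelPart_isOrtho L).ge hzL⟩,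
    hzN⟩

end parts

lemma isClosed_abelPart {L : Submodule ℝ H} (hL : IsClosed (L : Set H)) :
    IsClosed (abelPart L : Set H) := by
  rw [abelPart, sympCompl_eq_orthogonal_map_mulI]
  exact hL.inter (Submodule.isClosed_orthogonal _)

lemma isClosed_nonsepPart {L : Submodule ℝ H} (hL : IsClosed (L : Set H)) :
    IsClosed (nonsepPart L : Set H) :=
  hL.inter (isClosed_map_mulI hL)

lemma sup_factPartC_eq_top [CompleteSpace H] {L : Submodule ℝ H} (hL : IsClosed (L : Set H)) :
    zeroPart L ⊔ abelPartC L ⊔ factPartC L ⊔ nonsepPart L = ⊤ := by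
  have := (isClosed_abelPart hL).completeSpace_coe
  have := (isClosed_map_mulI (isClosed_abelPart hL)).completeSpace_coe
  have := (isClosed_nonsepPart hL).completeSpace_coe
  have : (zeroPart L).HasOrthogonalProjection := by unfold zeroPart; infer_instance
  have : (abelPartC L).HasOrthogonalProjection :=
    ((map_mulI_abelPart_isOrtho L).mono_right (abelPart_le L)).symm.hasOrthogonalProjection_sup
  have : (zeroPart L ⊔ abelPartC L).HasOrthogonalProjection :=
    (zeroPart_isOrtho L (abelPartC_le_sup_map_mulI L)).hasOrthogonalProjection_sup
  have : (zeroPart L ⊔ abelPartC L ⊔ nonsepPart L).HasOrthogonalProjection :=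
    (Submodule.isOrtho_sup_left.mpr ⟨zeroPart_isOrtho L ((nonsepPart_le L).trans le_sup_left),
      abelPartC_isOrtho_nonsepPart L⟩).hasOrthogonalProjection_sup
  rw [sup_right_comm _ (factPartC L), factPartC]
  exact Submodule.sup_orthogonal_of_hasOrthogonalProjection

lemma abelPart_sup_factPart_sup_nonsepPart [CompleteSpace H] {L : Submodule ℝ H}
    (hL : IsClosed (L : Set H)) :
    abelPart L ⊔ factPart L ⊔ nonsepPart L = L := by
  have := (isClosed_abelPart hL).completeSpace_coe
  have := (isClosed_nonsepPart hL).completeSpace_coe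
  refine le_antisymm (sup_le (sup_le (abelPart_le L) inf_le_right) (nonsepPart_le L)) ?_
  calc L = nonsepPart L ⊔ (nonsepPart L)ᗮ ⊓ L :=
        (Submodule.sup_orthogonal_inf_of_hasOrthogonalProjection (nonsepPart_le L)).symm
    _ = nonsepPart L ⊔ (abelPart L ⊔ (abelPart L)ᗮ ⊓ ((nonsepPart L)ᗮ ⊓ L)) := by
        rw [Submodule.sup_orthogonal_inf_of_hasOrthogonalProjection
          (le_inf (abelPart_isOrtho_nonsepPart L).le (abelPart_le L))]
    _ ≤ abelPart L ⊔ factPart L ⊔ nonsepPart L := by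
        rw [sup_comm (nonsepPart L)]
        exact sup_le_sup_right (sup_le_sup_left (inf_orthogonal_le_factPart L) _) _

/-- Decomposition of a closed real subspace `L` of a complex Hilbert space `H`:
`H` is the internal orthogonal direct sum `L₀ ⊕ La⊕ ⊕ Lf⊕ ⊕ L∞`, and under this decomposition
`L = La ⊕ Lf ⊕ L∞` (orthogonal direct sum, with zero component in `L₀`). -/
theorem subspace_decomposition [CompleteSpace H]
    (L : Submodule ℝ H) (hL : IsClosed (L : Set H)) :
    (zeroPart L ≤ (abelPartC L)ᗮ) ∧ (zeroPart L ≤ (factPartC L)ᗮ) ∧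
    (zeroPart L ≤ (nonsepPart L)ᗮ) ∧ (abelPartC L ≤ (factPartC L)ᗮ) ∧
    (abelPartC L ≤ (nonsepPart L)ᗮ) ∧ (factPartC L ≤ (nonsepPart L)ᗮ) ∧
    (zeroPart L ⊔ abelPartC L ⊔ factPartC L ⊔ nonsepPart L = ⊤) ∧
    (abelPart L ≤ (factPart L)ᗮ) ∧ (abelPart L ≤ (nonsepPart L)ᗮ) ∧
    (factPart L ≤ (nonsepPart L)ᗮ) ∧
    (abelPart L ⊔ factPart L ⊔ nonsepPart L = L) := by
  have hF := isOrtho_factPartC L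
  have hLaA : abelPart L ≤ abelPartC L := le_sup_left
  have hLfF : factPart L ≤ factPartC L := inf_le_left
  exact ⟨(zeroPart_isOrtho L (abelPartC_le_sup_map_mulI L)).le,
    (hF.mono_left (le_sup_left.trans le_sup_left)).le,
    (zeroPart_isOrtho L ((nonsepPart_le L).trans le_sup_left)).le,
    (hF.mono_left (le_sup_right.trans le_sup_left)).le,
    (abelPartC_isOrtho_nonsepPart L).le,
    (hF.mono_left le_sup_right).ge,
    sup_factPartC_eq_top hL,
    (hF.mono (hLaA.trans (le_sup_right.trans le_sup_left)) hLfF).le,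
    (abelPart_isOrtho_nonsepPart L).le,
    (hF.mono le_sup_right hLfF).ge,
    abelPart_sup_factPart_sup_nonsepPart hL⟩
end

section
/- Let H be a complex Hilbert space, K a bounded self-adjoint operator on H, and J an antilinear isometric involution on H such that J ∘ K = −K ∘ J. Let c : ℝ → ℝ be the continuous function c(λ) = √(λ/(1 − e^{−λ})) for λ ≠ 0 and c(0) = 1, and let c(K) be defined by continuous functional calculus. Then, as a real-linear bounded operator on H, the difference c(K) ∘ (id − J) ∘ c(K) − c(K)² has operator norm at most 1. -/
/-!
Since `J` is an antilinear isometric involution it is antiunitary, `⟪J x, J y⟫ = ⟪y, x⟫`, so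
`T ↦ J T J` is a continuous real star-algebra automorphism of `H →L[ℂ] H`. It sends `K` to `-K`,
hence commutes with the functional calculus: `J c(K) J = c(-K)`. The operator in question is
`-c(K) J c(K) = -c(K) c(-K) J`, and `c(λ) c(-λ) = |(λ/2) / sinh(λ/2)| ≤ 1`.
-/

/-- The function `c(λ) = √(λ/(1−e^{−λ}))` for `λ ≠ 0`, extended by continuity with `c(0) = 1`. -/
noncomputable def entropyCFun : ℝ → ℝ :=
  fun l => if l = 0 then 1 else Real.sqrt (l / (1 - Real.exp (-l)))

open Real
open scoped InnerProductSpace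

noncomputable def slopeOneSubExpNeg : ℝ → ℝ := dslope (fun t => 1 - exp (-t)) 0

lemma hasDerivAt_one_sub_exp_neg (t : ℝ) :
    HasDerivAt (fun t => 1 - exp (-t)) (exp (-t)) t := by
  simpa using ((hasDerivAt_neg t).exp).const_sub 1

lemma slopeOneSubExpNeg_zero : slopeOneSubExpNeg 0 = 1 := by
  simp [slopeOneSubExpNeg, dslope_same, (hasDerivAt_one_sub_exp_neg 0).deriv]

lemma slopeOneSubExpNeg_of_ne_zero {t : ℝ} (ht : t ≠ 0) :
    slopeOneSubExpNeg t = (1 - exp (-t)) / t := by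
  simp [slopeOneSubExpNeg, dslope_of_ne _ ht, slope_def_field]

lemma slopeOneSubExpNeg_pos (t : ℝ) : 0 < slopeOneSubExpNeg t := by
  rcases lt_trichotomy t 0 with ht | rfl | ht
  · rw [slopeOneSubExpNeg_of_ne_zero ht.ne]
    exact div_pos_of_neg_of_neg (by linarith [one_lt_exp_iff.2 (neg_pos.2 ht)]) ht
  · simp [slopeOneSubExpNeg_zero]
  · rw [slopeOneSubExpNeg_of_ne_zero ht.ne']
    exact div_pos (by linarith [exp_lt_one_iff.2 (neg_neg_of_pos ht)]) ht

lemma continuous_slopeOneSubExpNeg : Continuous slopeOneSubExpNeg :=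
  continuousOn_univ.1 <| (continuousOn_dslope Filter.univ_mem).2
    ⟨by fun_prop, (hasDerivAt_one_sub_exp_neg 0).differentiableAt⟩

lemma entropyCFun_eq_sqrt_inv (l : ℝ) : entropyCFun l = √(slopeOneSubExpNeg l)⁻¹ := by
  rcases eq_or_ne l 0 with rfl | hl
  · simp [entropyCFun, slopeOneSubExpNeg_zero]
  · simp [entropyCFun, hl, slopeOneSubExpNeg_of_ne_zero hl]

lemma continuous_entropyCFun : Continuous entropyCFun := by
  simp_rw [funext entropyCFun_eq_sqrt_inv]
  exact (continuous_slopeOneSubExpNeg.inv₀ fun t => (slopeOneSubExpNeg_pos t).ne').sqrt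

lemma entropyCFun_nonneg (l : ℝ) : 0 ≤ entropyCFun l := by
  rw [entropyCFun_eq_sqrt_inv]; positivity

lemma slopeOneSubExpNeg_mul_neg {t : ℝ} (ht : t ≠ 0) :
    slopeOneSubExpNeg t * slopeOneSubExpNeg (-t) = (sinh (t / 2) / (t / 2)) ^ 2 := by
  rw [slopeOneSubExpNeg_of_ne_zero ht, slopeOneSubExpNeg_of_ne_zero (neg_ne_zero.2 ht), neg_neg,
    sinh_eq]
  have h1 : exp t = exp (t / 2) ^ 2 := by rw [← exp_nat_mul]; ring_nf
  have h2 : exp (-t) = exp (-(t / 2)) ^ 2 := by rw [← exp_nat_mul]; ring_nf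
  have h3 : exp (t / 2) * exp (-(t / 2)) = 1 := by rw [← exp_add]; simp
  field_simp
  rw [h1, h2]
  linear_combination (1 - exp (t / 2) * exp (-(t / 2))) * h3

lemma sq_le_sinh_sq (x : ℝ) : x ^ 2 ≤ sinh x ^ 2 := by
  rw [← sq_abs x, ← sq_abs (sinh x), abs_sinh]
  exact pow_le_pow_left₀ (abs_nonneg x) (self_le_sinh_iff.2 (abs_nonneg x)) 2

lemma one_le_slopeOneSubExpNeg_mul_neg (t : ℝ) :
    1 ≤ slopeOneSubExpNeg t * slopeOneSubExpNeg (-t) := by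
  rcases eq_or_ne t 0 with rfl | ht
  · simp [slopeOneSubExpNeg_zero]
  rw [slopeOneSubExpNeg_mul_neg ht, div_pow, one_le_div (sq_pos_of_ne_zero (by simpa using ht))]
  exact sq_le_sinh_sq _

lemma entropyCFun_mul_entropyCFun_neg_le_one (l : ℝ) : entropyCFun l * entropyCFun (-l) ≤ 1 := by
  rw [entropyCFun_eq_sqrt_inv, entropyCFun_eq_sqrt_inv,
    ← sqrt_mul (inv_pos.2 (slopeOneSubExpNeg_pos l)).le, ← mul_inv, sqrt_le_one]
  exact inv_le_one_of_one_le₀ (one_le_slopeOneSubExpNeg_mul_neg l)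

section Antiunitary

variable {H : Type*} [NormedAddCommGroup H] [InnerProductSpace ℂ H]

lemma LinearIsometry.re_inner_map_map_of_antilinear (J : H →ₛₗᵢ[starRingEnd ℂ] H) (x y : H) :
    (⟪J x, J y⟫_ℂ).re = (⟪x, y⟫_ℂ).re := by
  have hx := norm_add_sq (𝕜 := ℂ) (J x) (J y)
  rw [← map_add, J.norm_map, J.norm_map, J.norm_map, norm_add_sq (𝕜 := ℂ)] at hx
  simpa using hx.symm

lemma LinearIsometry.inner_map_map_of_antilinear (J : H →ₛₗᵢ[starRingEnd ℂ] H) (x y : H) :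
    ⟪J x, J y⟫_ℂ = ⟪y, x⟫_ℂ := by
  have him := J.re_inner_map_map_of_antilinear x (Complex.I • y)
  rw [J.map_smulₛₗ, inner_smul_right, inner_smul_right] at him
  rw [← inner_conj_symm y x]
  apply Complex.ext
  · rw [Complex.conj_re]
    exact J.re_inner_map_map_of_antilinear x y
  · rw [Complex.conj_im]
    simpa using him

variable [CompleteSpace H]

noncomputable def conjByAntiunitary (J : H →ₛₗᵢ[starRingEnd ℂ] H) (hJ : ∀ x, J (J x) = x) :
    (H →L[ℂ] H) →⋆ₐ[ℝ] (H →L[ℂ] H) where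
  toFun T := J.toContinuousLinearMap.comp (T.comp J.toContinuousLinearMap)
  map_one' := by ext x; simp [hJ]
  map_mul' T S := by ext x; simp [hJ]
  map_zero' := by ext x; simp
  map_add' T S := by ext x; simp
  commutes' r := by ext x; simp [hJ, Algebra.algebraMap_eq_smul_one, ← Complex.coe_smul]
  map_star' T := by
    rw [ContinuousLinearMap.star_eq_adjoint, ContinuousLinearMap.star_eq_adjoint,
      ContinuousLinearMap.eq_adjoint_iff]
    intro x y
    simp only [ContinuousLinearMap.comp_apply, LinearIsometry.coe_toContinuousLinearMap]
    calc ⟪J (T.adjoint (J x)), y⟫_ℂ = ⟪J (T.adjoint (J x)), J (J y)⟫_ℂ := by rw [hJ]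
      _ = ⟪T (J y), J x⟫_ℂ := by
        rw [J.inner_map_map_of_antilinear, ContinuousLinearMap.adjoint_inner_right]
      _ = ⟪x, J (T (J y))⟫_ℂ := by rw [← J.inner_map_map_of_antilinear, hJ]

@[simp]
lemma conjByAntiunitary_apply (J : H →ₛₗᵢ[starRingEnd ℂ] H) (hJ : ∀ x, J (J x) = x)
    (T : H →L[ℂ] H) (x : H) : conjByAntiunitary J hJ T x = J (T (J x)) := rfl

lemma continuous_conjByAntiunitary (J : H →ₛₗᵢ[starRingEnd ℂ] H) (hJ : ∀ x, J (J x) = x) :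
    Continuous (conjByAntiunitary J hJ) :=
  AddMonoidHomClass.continuous_of_bound _ 1 fun T =>
    ContinuousLinearMap.opNorm_le_bound _ (by positivity) fun x => by
      simpa [J.norm_map] using T.le_opNorm (J x)

lemma conjByAntiunitary_cfc (J : H →ₛₗᵢ[starRingEnd ℂ] H) (hJ : ∀ x, J (J x) = x)
    {K : H →L[ℂ] H} (hK : IsSelfAdjoint K) (hJK : conjByAntiunitary J hJ K = -K)
    {f : ℝ → ℝ} (hf : Continuous f) :
    conjByAntiunitary J hJ (cfc f K) = cfc (fun l => f (-l)) K := by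
  rw [StarAlgHom.map_cfc _ f K hf.continuousOn (continuous_conjByAntiunitary J hJ) hK
    (hJK ▸ hK.neg), hJK, cfc_comp_neg f K hf.continuousOn hK]

end Antiunitary

lemma norm_cfc_entropyCFun_mul_neg_le_one {A : Type*} [CStarAlgebra A] (a : A) :
    ‖cfc (fun l => entropyCFun l * entropyCFun (-l)) a‖ ≤ 1 :=
  norm_cfc_le zero_le_one fun l _ => by
    rw [Real.norm_of_nonneg (mul_nonneg (entropyCFun_nonneg l) (entropyCFun_nonneg (-l)))]
    exact entropyCFun_mul_entropyCFun_neg_le_one l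

/-- Let `K` be a bounded self-adjoint operator on a complex Hilbert space `H` and `J` an
antilinear isometric involution with `J ∘ K = −K ∘ J`. Then the real-linear operator
`c(K)(id − J)c(K) − c(K)²`, with `c(K)` given by continuous functional calculus, has operator
norm at most `1`, i.e. `‖(c(K)(1−J)c(K) − c(K)²) x‖ ≤ ‖x‖` for all `x`. -/
theorem entropy_operator_bound
    {H : Type*} [NormedAddCommGroup H] [InnerProductSpace ℂ H] [CompleteSpace H]
    (K : H →L[ℂ] H) (hK : IsSelfAdjoint K)
    (J : H → H)
    (hadd : ∀ x y : H, J (x + y) = J x + J y)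
    (hsmul : ∀ (c : ℂ) (x : H), J (c • x) = (starRingEnd ℂ c) • J x)
    (hinv : ∀ x : H, J (J x) = x)
    (hiso : ∀ x : H, ‖J x‖ = ‖x‖)
    (hanti : ∀ x : H, J (K x) = -(K (J x))) :
    ∀ x : H,
      ‖cfc entropyCFun K (cfc entropyCFun K x - J (cfc entropyCFun K x))
        - cfc entropyCFun K (cfc entropyCFun K x)‖ ≤ ‖x‖ := by
  intro x
  let Jᵢ : H →ₛₗᵢ[starRingEnd ℂ] H :=
    { toFun := J, map_add' := hadd, map_smul' := hsmul, norm_map' := hiso }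
  let Φ := conjByAntiunitary Jᵢ hinv
  set C := cfc entropyCFun K
  have hΦK : Φ K = -K := by ext y; simp [Φ, Jᵢ, hanti, hinv]
  have hJC : J (C x) = Φ C (J x) := by simp [Φ, Jᵢ, hinv]
  have hCΦC : C * Φ C = cfc (fun l => entropyCFun l * entropyCFun (-l)) K := by
    rw [conjByAntiunitary_cfc Jᵢ hinv hK hΦK continuous_entropyCFun]
    exact (cfc_mul entropyCFun (fun l => entropyCFun (-l)) K continuous_entropyCFun.continuousOn
      (continuous_entropyCFun.comp continuous_neg).continuousOn).symm
  calc ‖C (C x - J (C x)) - C (C x)‖ = ‖(C * Φ C) (J x)‖ := by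
        rw [map_sub, sub_sub_cancel_left, norm_neg, hJC]; rfl
    _ ≤ ‖C * Φ C‖ * ‖J x‖ := (C * Φ C).le_opNorm _
    _ ≤ 1 * ‖x‖ := by
        rw [hiso, hCΦC]
        gcongr
        exact norm_cfc_entropyCFun_mul_neg_le_one K
    _ = ‖x‖ := one_mul _
end

section
/- Abstract monotonicity of the two-variable entropy function: suppose given, for each t ∈ ℝ, a real Hilbert space X_t; for each pair t ≤ t̂, a continuous linear map ρ_{t,t̂} : X_{t̂} → X_t with ‖ρ_{t,t̂}‖ ≤ 1; for each s, t ∈ ℝ, an orthogonal projection Q_{s,t} on X_t (idempotent and self-adjoint) such that (1) Q_{ŝ,t} ∘ Q_{s,t} = Q_{s,t} whenever s ≤ ŝ, (2) Q_{s,t} = id whenever s ≥ t, and (3) Q_{s,t} ∘ ρ_{t,t̂} = ρ_{t,t̂} ∘ Q_{s,t̂} whenever t ≤ t̂. Suppose further given vectors v_t ∈ X_t with ρ_{t,t̂}(v_{t̂}) = v_t for t ≤ t̂, and define T(s,t) := ‖Q_{s,t} v_t‖². Then: (a) T(s,t) is nondecreasing in t for each fixed s; (b) T(s,t) is nondecreasing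 in s for each fixed t, and T(s,t) = T(t,t) for s ≥ t; (c) t ↦ T(t,t) is nondecreasing; (d) for all s ≤ ŝ and t ≤ t̂ one has the rectangle inequality T(ŝ,t̂) − T(ŝ,t) − T(s,t̂) + T(s,t) ≥ 0. -/
/-!
For `s ≤ ŝ` the difference `Q_{ŝ,t} - Q_{s,t}` is again an orthogonal projection, so
`T(ŝ,t) - T(s,t) = ‖(Q_{ŝ,t} - Q_{s,t}) v_t‖² ≥ 0`. Both `Q_{s,t}` and `Q_{ŝ,t} - Q_{s,t}` commute
with the contractions `ρ_{t,t̂}`, which carry `v_{t̂}` to `v_t`; hence `‖A_t v_t‖ ≤ ‖A_{t̂} v_{t̂}‖`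
for either family `A`. For `A = Q_s` this is monotonicity in `t`, and for `A = Q_{ŝ} - Q_s` it is
the rectangle inequality.
-/

open ContinuousLinearMap

namespace IsStarProjection

variable {𝕜 E : Type*} [RCLike 𝕜] [NormedAddCommGroup E] [InnerProductSpace 𝕜 E] [CompleteSpace E]
  {p q : E →L[𝕜] E}

theorem norm_sq_apply (hp : IsStarProjection p) (x : E) :
    ‖p x‖ ^ 2 = RCLike.re (inner 𝕜 (p x) x) := by
  rw [apply_norm_sq_eq_inner_adjoint_left, ← star_eq_adjoint, hp.isSelfAdjoint.star_eq, ← mul_def,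
    hp.isIdempotentElem.eq]

theorem norm_sq_sub_apply (hp : IsStarProjection p) (hq : IsStarProjection q) (hqp : q * p = p)
    (x : E) : ‖(q - p) x‖ ^ 2 = ‖q x‖ ^ 2 - ‖p x‖ ^ 2 := by
  rw [(hp.sub_of_mul_eq_right hq hqp).norm_sq_apply, hq.norm_sq_apply, hp.norm_sq_apply,
    sub_apply, inner_sub_left, map_sub]

end IsStarProjection

theorem monotone_norm_apply_of_comp_eq_comp {𝕜 ι : Type*} [NontriviallyNormedField 𝕜]
    [Preorder ι] {X : ι → Type*} [∀ i, SeminormedAddCommGroup (X i)] [∀ i, NormedSpace 𝕜 (X i)]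
    (ρ : ∀ i j : ι, i ≤ j → X j →L[𝕜] X i) (hρ : ∀ i j (h : i ≤ j), ‖ρ i j h‖ ≤ 1)
    (v : ∀ i, X i) (hv : ∀ i j (h : i ≤ j), ρ i j h (v j) = v i)
    (A : ∀ i, X i →L[𝕜] X i) (hA : ∀ i j (h : i ≤ j), A i ∘L ρ i j h = ρ i j h ∘L A j) :
    Monotone fun i => ‖A i (v i)‖ := by
  intro i j h
  calc ‖A i (v i)‖ = ‖ρ i j h (A j (v j))‖ := by
        rw [← hv i j h, ← comp_apply, hA, comp_apply]
    _ ≤ 1 * ‖A j (v j)‖ := (ρ i j h).le_of_opNorm_le (hρ i j h) _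
    _ = ‖A j (v j)‖ := one_mul _

/-- Abstract monotonicity of the two-variable entropy function `T(s,t) = ‖Q_{s,t} v_t‖²` built
from real Hilbert spaces `X_t`, contractions `ρ_{t,t̂} : X_{t̂} → X_t`, compatible orthogonal
projections `Q_{s,t}` with `Q_{s,t} = id` for `s ≥ t`, and coherent vectors `v_t`:
(a) `T` is nondecreasing in `t`; (b) `T` is nondecreasing in `s` and `T(s,t) = T(t,t)` for
`s ≥ t`; (c) `t ↦ T(t,t)` is nondecreasing; (d) the rectangle inequality holds. -/
theorem abstract_two_variable_entropy_monotonicity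
    (X : ℝ → Type*) [∀ t, NormedAddCommGroup (X t)] [∀ t, InnerProductSpace ℝ (X t)]
    [∀ t, CompleteSpace (X t)]
    (ρ : ∀ t t' : ℝ, t ≤ t' → (X t' →L[ℝ] X t))
    (hρnorm : ∀ (t t' : ℝ) (h : t ≤ t'), ‖ρ t t' h‖ ≤ 1)
    (Q : ℝ → ∀ t : ℝ, X t →L[ℝ] X t)
    (hQidem : ∀ s t, (Q s t) ∘L (Q s t) = Q s t)
    (hQsa : ∀ s t, IsSelfAdjoint (Q s t))
    (hQmono : ∀ s s' t, s ≤ s' → (Q s' t) ∘L (Q s t) = Q s t)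
    (hQone : ∀ s t, t ≤ s → Q s t = ContinuousLinearMap.id ℝ (X t))
    (hQρ : ∀ (s t t' : ℝ) (h : t ≤ t'), (Q s t) ∘L (ρ t t' h) = (ρ t t' h) ∘L (Q s t'))
    (v : ∀ t, X t)
    (hv : ∀ (t t' : ℝ) (h : t ≤ t'), ρ t t' h (v t') = v t) :
    (∀ s : ℝ, Monotone fun t => ‖Q s t (v t)‖ ^ 2) ∧
    (∀ t : ℝ, Monotone fun s => ‖Q s t (v t)‖ ^ 2) ∧
    (∀ s t : ℝ, t ≤ s → ‖Q s t (v t)‖ ^ 2 = ‖Q t t (v t)‖ ^ 2) ∧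
    (Monotone fun t => ‖Q t t (v t)‖ ^ 2) ∧
    (∀ s s' t t' : ℝ, s ≤ s' → t ≤ t' →
      0 ≤ ‖Q s' t' (v t')‖ ^ 2 - ‖Q s' t (v t)‖ ^ 2
          - ‖Q s t' (v t')‖ ^ 2 + ‖Q s t (v t)‖ ^ 2) := by
  have hproj : ∀ s t, IsStarProjection (Q s t) := fun s t => ⟨hQidem s t, hQsa s t⟩
  have hincrement : ∀ s s' t, s ≤ s' →
      ‖(Q s' t - Q s t) (v t)‖ ^ 2 = ‖Q s' t (v t)‖ ^ 2 - ‖Q s t (v t)‖ ^ 2 := fun s s' t h =>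
    (hproj s t).norm_sq_sub_apply (hproj s' t) (hQmono s s' t h) (v t)
  have hmono_of_comm : ∀ A : ∀ t, X t →L[ℝ] X t,
      (∀ t t' (h : t ≤ t'), A t ∘L ρ t t' h = ρ t t' h ∘L A t') →
      Monotone fun t => ‖A t (v t)‖ ^ 2 := fun A hA _ _ h =>
    pow_le_pow_left₀ (norm_nonneg _)
      (monotone_norm_apply_of_comp_eq_comp ρ hρnorm v hv A hA h) 2
  have hmono_t : ∀ s, Monotone fun t => ‖Q s t (v t)‖ ^ 2 := fun s =>
    hmono_of_comm (Q s) (hQρ s)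
  have hmono_s : ∀ t, Monotone fun s => ‖Q s t (v t)‖ ^ 2 := fun t s s' h =>
    sub_nonneg.mp (hincrement s s' t h ▸ sq_nonneg _)
  refine ⟨hmono_t, hmono_s, fun s t h => by rw [hQone s t h, hQone t t le_rfl],
    fun t t' h => (hmono_t t h).trans (hmono_s t' h), ?_⟩
  intro s s' t t' hs ht
  have hdiff := hmono_of_comm (fun t => Q s' t - Q s t)
    (fun t t' h => by rw [sub_comp, comp_sub, hQρ, hQρ]) ht
  linarith [hincrement s s' t hs, hincrement s s' t' hs]
end

section
/- Let T : ℝ × ℝ → ℝ be nondecreasing in each variable separately (i.e. T(s,t) ≤ T(s',t) for s ≤ s' and T(s,t) ≤ T(s,t') for t ≤ t'). Then: (i) at every point t₀ at which the function u ↦ T(u,u) is continuous, T is jointly continuous at (t₀,t₀); (ii) consequently, T is continuous at (t,t) for Lebesgue-almost every t ∈ ℝ. -/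
open MeasureTheory

/-- Let `T : ℝ × ℝ → ℝ` be nondecreasing in each variable separately. Then (i) at every point
`t₀` where `u ↦ T(u,u)` is continuous, `T` is jointly continuous at `(t₀,t₀)`; (ii) `T` is
jointly continuous at `(t,t)` for Lebesgue-almost every `t`. -/
theorem monotone_two_variable_continuity_on_diagonal
    (T : ℝ → ℝ → ℝ)
    (hs : ∀ t, Monotone fun s => T s t)
    (ht : ∀ s, Monotone fun t => T s t) :
    (∀ t₀ : ℝ, ContinuousAt (fun u => T u u) t₀ →
      ContinuousAt (fun p : ℝ × ℝ => T p.1 p.2) (t₀, t₀)) ∧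
    (∀ᵐ t ∂(volume : Measure ℝ), ContinuousAt (fun p : ℝ × ℝ => T p.1 p.2) (t, t)) := by
  have main : ∀ t₀ : ℝ, ContinuousAt (fun u => T u u) t₀ →
      ContinuousAt (fun p : ℝ × ℝ => T p.1 p.2) (t₀, t₀) := by
    intro t₀ hcont
    rw [Metric.continuousAt_iff] at hcont ⊢
    intro ε hε
    obtain ⟨δ, hδ, hδ'⟩ := hcont ε hε
    refine ⟨δ/2, by positivity, ?_⟩
    intro p hp
    rw [Prod.dist_eq] at hp
    have h1 : dist p.1 t₀ < δ/2 := lt_of_le_of_lt (le_max_left _ _) hp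
    have h2 : dist p.2 t₀ < δ/2 := lt_of_le_of_lt (le_max_right _ _) hp
    rw [Real.dist_eq] at h1 h2
    have h1' := abs_lt.mp h1
    have h2' := abs_lt.mp h2
    have hl : T (t₀ - δ/2) (t₀ - δ/2) ≤ T p.1 p.2 :=
      le_trans (hs (t₀ - δ/2) (by linarith [h1'.1] : t₀ - δ/2 ≤ p.1))
        (ht p.1 (by linarith [h2'.1] : t₀ - δ/2 ≤ p.2))
    have hu : T p.1 p.2 ≤ T (t₀ + δ/2) (t₀ + δ/2) :=
      le_trans (hs p.2 (by linarith [h1'.2] : p.1 ≤ t₀ + δ/2))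
        (ht (t₀ + δ/2) (by linarith [h2'.2] : p.2 ≤ t₀ + δ/2))
    have e1 := hδ' (x := t₀ - δ/2) (by rw [Real.dist_eq]; rw [abs_of_nonpos] <;> linarith)
    have e2 := hδ' (x := t₀ + δ/2) (by rw [Real.dist_eq]; rw [abs_of_nonneg] <;> linarith)
    rw [Real.dist_eq] at e1 e2
    rw [Real.dist_eq]
    have e1' := abs_lt.mp e1
    have e2' := abs_lt.mp e2
    simp only at e1' e2' hl hu ⊢
    rw [abs_lt]
    constructor <;> linarith
  refine ⟨main, ?_⟩
  have hmono : Monotone (fun u => T u u) := fun a b h => le_trans (hs _ h) (ht _ h)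
  have hnull : volume {x | ¬ ContinuousAt (fun u => T u u) x} = 0 :=
    (hmono.countable_not_continuousAt).measure_zero _
  have hae : ∀ᵐ t ∂(volume : Measure ℝ), ContinuousAt (fun u => T u u) t := by
    rw [ae_iff]; exact hnull
  filter_upwards [hae] with t htc using main t htc
end

section
/- Second-derivative estimates in the smooth case: let T : ℝ² → ℝ be continuously differentiable, nondecreasing in the first variable s, and satisfying T(s,t) = T(t,t) whenever s ≥ t. Assume there are twice continuously differentiable functions T̂₊, T̂₋ : ℝ² → ℝ with T = T̂₊ on {(s,t) : s ≥ t} and T = T̂₋ on {(s,t) : s ≤ t}, and assume the rectangle inequality T(ŝ,t̂) − T(ŝ,t) − T(s,t̂) + T(s,t) ≥ 0 for all s ≤ ŝ and t ≤ t̂. Then the function S(t) := T(t,t) is twice differentiable on ℝ, and for every t ∈ ℝ: (∂²T̂₋/∂t²)(t,t) ≤ S''(t) = (∂²T̂₊/∂t²)(t,t). -/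
/-!
For `u ≤ a` the diagonal `S u = T u u` equals `T a u = T̂₊ a u`, so near any `t < a` the function
`S` is `T̂₊ a ·`, and `S''(t) = ∂²T̂₊/∂t² (a, t)` for every `a > t`; letting `a ↓ t` gives
`S''(t) = ∂²T̂₊/∂t² (t, t)`. For the lower bound, monotonicity in `s` gives
`T̂₋ t u = T t u ≤ T u u = S u` for `u ≥ t`, with equality at `u = t`. Both `S` and `T̂₋ t ·` have
the derivative of `T t ·` at `t`, the first from the left and the second from the right, so
`T̂₋ t ·` touches `S` to first order from below on the right, which forces the inequality between
the second derivatives.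
-/

open Set Filter Topology

section PartialDeriv

variable {𝕜 X E : Type*} [NontriviallyNormedField 𝕜] [NormedAddCommGroup X] [NormedSpace 𝕜 X]
  [NormedAddCommGroup E] [NormedSpace 𝕜 E] {f : X → 𝕜 → E}

theorem DifferentiableAt.hasDerivAt_of_uncurry {x : X} {y : 𝕜}
    (hf : DifferentiableAt 𝕜 (fun p : X × 𝕜 => f p.1 p.2) (x, y)) :
    HasDerivAt (f x) (fderiv 𝕜 (fun p : X × 𝕜 => f p.1 p.2) (x, y) (0, 1)) y :=
  hf.hasFDerivAt.comp_hasDerivAt y ((hasDerivAt_const y x).prodMk (hasDerivAt_id y))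

theorem ContDiff.differentiable_of_uncurry {n : WithTop ℕ∞}
    (hf : ContDiff 𝕜 n fun p : X × 𝕜 => f p.1 p.2) (hn : n ≠ 0) (x : X) :
    Differentiable 𝕜 (f x) :=
  fun y => ((hf.differentiable hn) (x, y)).hasDerivAt_of_uncurry.differentiableAt

theorem ContDiff.deriv_of_uncurry {n : WithTop ℕ∞}
    (hf : ContDiff 𝕜 (n + 1) fun p : X × 𝕜 => f p.1 p.2) :
    ContDiff 𝕜 n fun p : X × 𝕜 => deriv (f p.1) p.2 := by
  have hdiff := hf.differentiable (by simp)
  have heq : (fun p : X × 𝕜 => deriv (f p.1) p.2) =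
      fun p => fderiv 𝕜 (fun p : X × 𝕜 => f p.1 p.2) p (0, 1) :=
    funext fun p => (hdiff p).hasDerivAt_of_uncurry.deriv
  rw [heq]
  exact (hf.fderiv_right le_rfl).clm_apply contDiff_const

theorem ContDiff.differentiable_deriv_of_uncurry
    (hf : ContDiff 𝕜 2 fun p : X × 𝕜 => f p.1 p.2) (x : X) :
    Differentiable 𝕜 (deriv (f x)) :=
  ContDiff.differentiable_of_uncurry (f := fun x y => deriv (f x) y)
    (hf.deriv_of_uncurry (n := 1)) one_ne_zero x

theorem ContDiff.continuous_deriv_deriv_of_uncurry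
    (hf : ContDiff 𝕜 2 fun p : X × 𝕜 => f p.1 p.2) :
    Continuous fun p : X × 𝕜 => deriv (deriv (f p.1)) p.2 :=
  (ContDiff.deriv_of_uncurry (n := 0) (f := fun x y => deriv (f x) y)
    (hf.deriv_of_uncurry (n := 1))).continuous

end PartialDeriv

theorem deriv_eq_of_eqOn_of_uniqueDiffWithinAt {𝕜 F : Type*} [NontriviallyNormedField 𝕜]
    [NormedAddCommGroup F] [NormedSpace 𝕜 F] {f g : 𝕜 → F} {s : Set 𝕜} {x : 𝕜}
    (h : EqOn f g s) (hx : x ∈ s) (hs : UniqueDiffWithinAt 𝕜 s x)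
    (hf : DifferentiableAt 𝕜 f x) (hg : DifferentiableAt 𝕜 g x) : deriv f x = deriv g x := by
  rw [← hf.derivWithin hs, ← hg.derivWithin hs, derivWithin_congr h (h hx)]

theorem IsLocalMinOn.deriv_deriv_nonneg {ψ : ℝ → ℝ} {t : ℝ} (hψ : Differentiable ℝ ψ)
    (hmin : IsLocalMinOn ψ (Ici t) t) (hd : deriv ψ t = 0) : 0 ≤ deriv (deriv ψ) t := by
  by_contra! hneg
  have hdec : ∀ᶠ u in 𝓝[>] t, deriv ψ u < 0 :=
    deriv_neg_right_of_sign_deriv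
      (nhdsWithin_le_nhds (eventually_nhdsWithin_sign_eq_of_deriv_neg hneg hd))
  obtain ⟨b, htb : t < b, hsub⟩ := mem_nhdsGT_iff_exists_Ioo_subset.mp
    (hdec.and (hmin.filter_mono (nhdsWithin_mono t Ioi_subset_Ici_self)))
  obtain ⟨u, htu, hub⟩ := exists_between htb
  have hanti : StrictAntiOn ψ (Icc t u) := by
    refine strictAntiOn_of_deriv_neg (convex_Icc t u) hψ.continuous.continuousOn fun x hx => ?_
    rw [interior_Icc] at hx
    exact (hsub ⟨hx.1, hx.2.trans hub⟩).1
  have hlt : ψ u < ψ t := hanti (left_mem_Icc.mpr htu.le) (right_mem_Icc.mpr htu.le) htu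
  have hge : ψ t ≤ ψ u := (hsub ⟨htu, hub⟩).2
  exact hlt.not_ge hge

section OneSidedAgreement

variable {E : Type*} {S : ℝ → E} {F : ℝ → ℝ → E}

theorem eventuallyEq_of_eqOn_Iic (hS : ∀ a, EqOn S (F a) (Iic a)) {a t : ℝ} (h : t < a) :
    S =ᶠ[𝓝 t] F a := by
  filter_upwards [Iio_mem_nhds h] with u (hu : u < a) using hS a hu.le

variable [NormedAddCommGroup E] [NormedSpace ℝ E]

theorem differentiable_of_eqOn_Iic {n : WithTop ℕ∞} (hF : ContDiff ℝ n fun p : ℝ × ℝ => F p.1 p.2)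
    (hn : n ≠ 0) (hS : ∀ a, EqOn S (F a) (Iic a)) : Differentiable ℝ S := fun t =>
  (hF.differentiable_of_uncurry hn (t + 1) t).congr_of_eventuallyEq
    (eventuallyEq_of_eqOn_Iic hS (lt_add_one t))

theorem hasDerivAt_deriv_of_eqOn_Iic (hF : ContDiff ℝ 2 fun p : ℝ × ℝ => F p.1 p.2)
    (hS : ∀ a, EqOn S (F a) (Iic a)) (t : ℝ) :
    HasDerivAt (deriv S) (deriv (deriv (F t)) t) t := by
  have hder : ∀ a, t < a → HasDerivAt (deriv S) (deriv (deriv (F a)) t) t := fun a h =>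
    (hF.differentiable_deriv_of_uncurry a t).hasDerivAt.congr_of_eventuallyEq
      (eventuallyEq_of_eqOn_Iic hS h).deriv
  have hlim : Tendsto (fun a => deriv (deriv (F a)) t) (𝓝[>] t) (𝓝 (deriv (deriv (F t)) t)) :=
    ((hF.continuous_deriv_deriv_of_uncurry.comp (continuous_id.prodMk continuous_const)).tendsto
      t).mono_left nhdsWithin_le_nhds
  have hconst : Tendsto (fun a => deriv (deriv (F a)) t) (𝓝[>] t)
      (𝓝 (deriv (deriv (F (t + 1))) t)) :=
    tendsto_const_nhds.congr' (eventually_nhdsWithin_of_forall fun a h =>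
      (hder (t + 1) (lt_add_one t)).unique (hder a h))
  rw [tendsto_nhds_unique hlim hconst]
  exact hder (t + 1) (lt_add_one t)

end OneSidedAgreement

theorem deriv_deriv_le_of_eventuallyLE_nhdsGE {f g : ℝ → ℝ} {t : ℝ} (hf : Differentiable ℝ f)
    (hg : Differentiable ℝ g) (hf' : DifferentiableAt ℝ (deriv f) t)
    (hg' : DifferentiableAt ℝ (deriv g) t) (hle : f ≤ᶠ[𝓝[≥] t] g) (h₀ : f t = g t)
    (h₁ : deriv f t = deriv g t) : deriv (deriv f) t ≤ deriv (deriv g) t := by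
  have hmin : IsLocalMinOn (g - f) (Ici t) t :=
    hle.mono fun u hu => by simp only [Pi.sub_apply, h₀, sub_self, sub_nonneg, hu]
  have hd : deriv (g - f) = deriv g - deriv f := funext fun u => deriv_sub (hg u) (hf u)
  have := IsLocalMinOn.deriv_deriv_nonneg (hg.sub hf) hmin
    (by rw [hd, Pi.sub_apply, h₁, sub_self])
  rw [hd, deriv_sub hg' hf'] at this
  linarith

theorem second_derivative_estimates_smooth_general
    (T Tp Tm : ℝ → ℝ → ℝ)
    (hT : ContDiff ℝ 1 fun p : ℝ × ℝ => T p.1 p.2)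
    (hmono : ∀ t, Monotone fun s => T s t)
    (hconst : ∀ s t : ℝ, t ≤ s → T s t = T t t)
    (hTp : ContDiff ℝ 2 fun p : ℝ × ℝ => Tp p.1 p.2)
    (hTm : ContDiff ℝ 2 fun p : ℝ × ℝ => Tm p.1 p.2)
    (hTpeq : ∀ s t : ℝ, t ≤ s → Tp s t = T s t)
    (hTmeq : ∀ s t : ℝ, s ≤ t → Tm s t = T s t) :
    ∀ t : ℝ,
      HasDerivAt (deriv fun u => T u u) (deriv (deriv fun w => Tp t w) t) t ∧
      deriv (deriv fun w => Tm t w) t ≤ deriv (deriv fun w => Tp t w) t := by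
  intro t
  have hS : ∀ a, EqOn (fun u => T u u) (Tp a) (Iic a) := fun a u hu => by
    rw [hTpeq a u hu, hconst a u hu]
  have hS'' := hasDerivAt_deriv_of_eqOn_Iic hTp hS t
  have hSdiff := differentiable_of_eqOn_Iic hTp two_ne_zero hS
  have hTt : DifferentiableAt ℝ (T t) t := hT.differentiable_of_uncurry one_ne_zero t t
  have hTm' : deriv (Tm t) t = deriv (T t) t :=
    deriv_eq_of_eqOn_of_uniqueDiffWithinAt (fun u hu => hTmeq t u hu) self_mem_Ici
      (uniqueDiffOn_Ici t t self_mem_Ici) (hTm.differentiable_of_uncurry two_ne_zero t t) hTt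
  have hS' : deriv (fun u => T u u) t = deriv (T t) t :=
    (deriv_eq_of_eqOn_of_uniqueDiffWithinAt (fun u hu => hconst t u hu) self_mem_Iic
      (uniqueDiffOn_Iic t t self_mem_Iic) hTt (hSdiff t)).symm
  refine ⟨hS'', hS''.deriv ▸ ?_⟩
  refine deriv_deriv_le_of_eventuallyLE_nhdsGE (hTm.differentiable_of_uncurry two_ne_zero t)
    hSdiff (hTm.differentiable_deriv_of_uncurry t t) hS''.differentiableAt ?_ (hTmeq t t le_rfl)
    (hTm'.trans hS'.symm)
  filter_upwards [self_mem_nhdsWithin] with u (hu : t ≤ u)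
  rw [hTmeq t u hu]
  exact hmono u hu

/-- Second-derivative estimates in the smooth case: let `T(s,t)` be `C¹`, nondecreasing in `s`,
with `T(s,t) = T(t,t)` for `s ≥ t`, agreeing with `C²` functions `T̂₊` on `{s ≥ t}` and `T̂₋` on
`{s ≤ t}`, and satisfying the rectangle inequality. Then `S(t) := T(t,t)` is twice
differentiable and `(∂²T̂₋/∂t²)(t,t) ≤ S''(t) = (∂²T̂₊/∂t²)(t,t)` for every `t`. -/
theorem second_derivative_estimates_smooth
    (T Tp Tm : ℝ → ℝ → ℝ)
    (hT : ContDiff ℝ 1 fun p : ℝ × ℝ => T p.1 p.2)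
    (hmono : ∀ t, Monotone fun s => T s t)
    (hconst : ∀ s t : ℝ, t ≤ s → T s t = T t t)
    (hTp : ContDiff ℝ 2 fun p : ℝ × ℝ => Tp p.1 p.2)
    (hTm : ContDiff ℝ 2 fun p : ℝ × ℝ => Tm p.1 p.2)
    (hTpeq : ∀ s t : ℝ, t ≤ s → Tp s t = T s t)
    (hTmeq : ∀ s t : ℝ, s ≤ t → Tm s t = T s t)
    (hrect : ∀ s s' t t' : ℝ, s ≤ s' → t ≤ t' →
      0 ≤ T s' t' - T s' t - T s t' + T s t) :
    ∀ t : ℝ,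
      HasDerivAt (deriv fun u => T u u) (deriv (deriv fun w => Tp t w) t) t ∧
      deriv (deriv fun w => Tm t w) t ≤ deriv (deriv fun w => Tp t w) t :=
  second_derivative_estimates_smooth_general T Tp Tm hT hmono hconst hTp hTm hTpeq hTmeq
end

section
/- Thermal entropy of the U(1)-current as a function of the cut: let β > 0 and f ∈ C_c^∞(ℝ). The function S_β(t) := ∫_{−∞}^{t} f'(x)² · β(1 − e^{2π(x−t)/β}) dx is twice continuously differentiable on ℝ, with S_β'(t) = 2π ∫_{−∞}^{t} f'(x)² e^{2π(x−t)/β} dx ≥ 0 and S_β''(t) = 2π f'(t)² − (4π²/β) ∫_{−∞}^{t} f'(x)² e^{2π(x−t)/β} dx. -/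
open MeasureTheory

open Set in
lemma hasDerivAt_integral_Iio (h : ℝ → ℝ) (hc : Continuous h) (hs : HasCompactSupport h)
    (t : ℝ) : HasDerivAt (fun u => ∫ x in Iio u, h x) (h t) t := by
  have hint : Integrable h := hc.integrable_of_hasCompactSupport hs
  have key : ∀ u : ℝ, ∫ x in Iio u, h x = (∫ x in Iio (0:ℝ), h x) + ∫ x in (0:ℝ)..u, h x := by
    intro u
    rw [← intervalIntegral.integral_Iic_sub_Iic hint.integrableOn hint.integrableOn,
      integral_Iic_eq_integral_Iio, integral_Iic_eq_integral_Iio]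
    ring
  have : HasDerivAt (fun u => (∫ x in Iio (0:ℝ), h x) + ∫ x in (0:ℝ)..u, h x) (h t) t :=
    (intervalIntegral.integral_hasDerivAt_right hint.intervalIntegrable
      (hc.stronglyMeasurable.stronglyMeasurableAtFilter) hc.continuousAt).const_add _
  exact this.congr_of_eventuallyEq (Filter.Eventually.of_forall fun u => (key u))


/-- The thermal relative entropy of the `U(1)`-current at inverse temperature `β` for the
half-line cut at `t`: `S_β(t) = ∫_{−∞}^t f'(x)² · β(1 − e^{2π(x−t)/β}) dx`. -/
noncomputable def thermalEntropy (β : ℝ) (f : ℝ → ℝ) : ℝ → ℝ :=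
  fun t => ∫ x in Set.Iio t,
    deriv f x ^ 2 * (β * (1 - Real.exp (2 * Real.pi * (x - t) / β)))

/-- For `β > 0` and `f ∈ C_c^∞(ℝ)`, the thermal entropy `S_β` is `C²` with
`S_β'(t) = 2π ∫_{−∞}^t f'(x)² e^{2π(x−t)/β} dx ≥ 0` and
`S_β''(t) = 2π f'(t)² − (4π²/β) ∫_{−∞}^t f'(x)² e^{2π(x−t)/β} dx`. -/
theorem thermal_entropy_derivatives
    (β : ℝ) (hβ : 0 < β)
    (f : ℝ → ℝ) (hf : ContDiff ℝ (⊤ : ℕ∞) f) (hsupp : HasCompactSupport f) :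
    ContDiff ℝ 2 (thermalEntropy β f) ∧
    (∀ t : ℝ, deriv (thermalEntropy β f) t
      = 2 * Real.pi * ∫ x in Set.Iio t, deriv f x ^ 2 * Real.exp (2 * Real.pi * (x - t) / β)) ∧
    (∀ t : ℝ, 0 ≤ deriv (thermalEntropy β f) t) ∧
    (∀ t : ℝ, deriv (deriv (thermalEntropy β f)) t
      = 2 * Real.pi * deriv f t ^ 2
        - (4 * Real.pi ^ 2 / β) *
          ∫ x in Set.Iio t, deriv f x ^ 2 * Real.exp (2 * Real.pi * (x - t) / β)) := by
  open Set in
  set π := Real.pi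
  set g : ℝ → ℝ := fun x => deriv f x ^ 2 with hg_def
  set gE : ℝ → ℝ := fun x => g x * Real.exp (2 * π * x / β) with hgE_def
  have hgc : Continuous g := ((hf.continuous_deriv (by simp)).pow 2)
  have hgs : HasCompactSupport g := by
    have := hsupp.deriv.mul_right (f' := deriv f)
    simp only [hg_def, pow_two]; exact this
  have hgEc : Continuous gE := hgc.mul (by continuity)
  have hgEs : HasCompactSupport gE := hgs.mul_right
  have hgint : Integrable g := hgc.integrable_of_hasCompactSupport hgs
  have hgEint : Integrable gE := hgEc.integrable_of_hasCompactSupport hgEs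
  set G : ℝ → ℝ := fun t => ∫ x in Iio t, g x with hG_def
  set H : ℝ → ℝ := fun t => ∫ x in Iio t, gE x with hH_def
  have hG : ∀ t, HasDerivAt G (g t) t := hasDerivAt_integral_Iio g hgc hgs
  have hH : ∀ t, HasDerivAt H (gE t) t := hasDerivAt_integral_Iio gE hgEc hgEs
  have hin : ∀ t : ℝ, Real.exp (-(2 * π * t / β)) * gE t = g t := by
    intro t
    rw [hgE_def]
    rw [show Real.exp (-(2 * π * t / β)) * (g t * Real.exp (2 * π * t / β))
      = g t * (Real.exp (-(2 * π * t / β)) * Real.exp (2 * π * t / β)) by ring,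
      ← Real.exp_add]
    simp
  -- rewrite thermalEntropy
  have hS_eq : ∀ t, thermalEntropy β f t
      = β * G t - β * (Real.exp (-(2 * π * t / β)) * H t) := by
    intro t
    have hpt : ∀ x : ℝ, deriv f x ^ 2 * (β * (1 - Real.exp (2 * π * (x - t) / β)))
        = β * g x - (β * Real.exp (-(2 * π * t / β))) * gE x := by
      intro x
      have : Real.exp (2 * π * (x - t) / β)
          = Real.exp (-(2 * π * t / β)) * Real.exp (2 * π * x / β) := by
        rw [← Real.exp_add]; ring_nf
      rw [hgE_def]
      simp only [this, hg_def]
      ring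
    unfold thermalEntropy
    show ∫ x in Set.Iio t, deriv f x ^ 2 * (β * (1 - Real.exp (2 * π * (x - t) / β))) = _
    simp only [hpt]
    rw [integral_sub (hgint.integrableOn.const_mul β) (hgEint.integrableOn.const_mul _),
      integral_const_mul, integral_const_mul]
    ring
  -- exp-factor derivative
  have hE' : ∀ t : ℝ, HasDerivAt (fun t => Real.exp (-(2 * π * t / β)))
      (-(2 * π / β) * Real.exp (-(2 * π * t / β))) t := by
    intro t
    have h1 : HasDerivAt (fun t : ℝ => -(2 * π * t / β)) (-(2 * π / β)) t := by
      simpa [Pi.neg_def] using ((hasDerivAt_id t).const_mul (2 * π)).div_const β |>.neg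
    simpa [mul_comm] using h1.exp
  -- exp factor times H as an integral
  have hEH : ∀ t : ℝ, Real.exp (-(2 * π * t / β)) * H t
      = ∫ x in Iio t, deriv f x ^ 2 * Real.exp (2 * π * (x - t) / β) := by
    intro t
    rw [hH_def]
    simp only
    rw [← integral_const_mul]
    apply setIntegral_congr_fun measurableSet_Iio
    intro x _
    rw [hgE_def, hg_def]
    simp only
    rw [show Real.exp (-(2 * π * t / β)) * (deriv f x ^ 2 * Real.exp (2 * π * x / β))
      = deriv f x ^ 2 * (Real.exp (-(2 * π * t / β)) * Real.exp (2 * π * x / β)) by ring,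
      ← Real.exp_add]
    ring_nf
  -- first derivative
  set D : ℝ → ℝ := fun t => 2 * π * (Real.exp (-(2 * π * t / β)) * H t) with hD_def
  have hS' : ∀ t, HasDerivAt (thermalEntropy β f) (D t) t := by
    intro t
    have h2 : HasDerivAt (fun t => β * G t - β * (Real.exp (-(2 * π * t / β)) * H t))
        (β * g t - β * ((-(2 * π / β) * Real.exp (-(2 * π * t / β))) * H t
          + Real.exp (-(2 * π * t / β)) * gE t)) t :=
      ((hG t).const_mul β).sub (((hE' t).mul (hH t)).const_mul β)
    have h3 : β * g t - β * ((-(2 * π / β) * Real.exp (-(2 * π * t / β))) * H t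
          + Real.exp (-(2 * π * t / β)) * gE t) = D t := by
      rw [hin t, hD_def]
      field_simp
      ring
    rw [h3] at h2
    exact h2.congr_of_eventuallyEq (Filter.Eventually.of_forall fun u => (hS_eq u))
  have hderivS : deriv (thermalEntropy β f) = D := funext fun t => (hS' t).deriv
  -- second derivative
  set D2 : ℝ → ℝ := fun t => 2 * π * g t
      - (4 * π ^ 2 / β) * (Real.exp (-(2 * π * t / β)) * H t) with hD2_def
  have hD' : ∀ t, HasDerivAt D (D2 t) t := by
    intro t
    have h2 : HasDerivAt D (2 * π * ((-(2 * π / β) * Real.exp (-(2 * π * t / β))) * H t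
        + Real.exp (-(2 * π * t / β)) * gE t)) t := ((hE' t).mul (hH t)).const_mul _
    have h3 : 2 * π * ((-(2 * π / β) * Real.exp (-(2 * π * t / β))) * H t
        + Real.exp (-(2 * π * t / β)) * gE t) = D2 t := by
      rw [hin t, hD2_def]; field_simp; ring
    rwa [h3] at h2
  have hderivD : deriv D = D2 := funext fun t => (hD' t).deriv
  have hHcont : Continuous H := continuous_iff_continuousAt.2 fun t => (hH t).continuousAt
  have hEcont : Continuous (fun t : ℝ => Real.exp (-(2 * π * t / β))) := by continuity
  refine ⟨?_, ?_, ?_, ?_⟩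
  · -- C²
    have hD2cont : Continuous D2 := by
      rw [hD2_def]
      exact (continuous_const.mul hgc).sub (continuous_const.mul (hEcont.mul hHcont))
    have hDc1 : ContDiff ℝ 1 D :=
      contDiff_one_iff_deriv.2 ⟨fun t => (hD' t).differentiableAt, by rw [hderivD]; exact hD2cont⟩
    rw [show (2 : WithTop ℕ∞) = 1 + 1 by norm_num, contDiff_succ_iff_deriv]
    exact ⟨fun t => (hS' t).differentiableAt, by simp, by rw [hderivS]; exact hDc1⟩
  · intro t; rw [hderivS, hD_def]; simp only; rw [hEH t]
  · intro t
    rw [hderivS, hD_def]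
    have hH0 : 0 ≤ H t := setIntegral_nonneg measurableSet_Iio fun x _ =>
      mul_nonneg (sq_nonneg _) (Real.exp_pos _).le
    have := Real.pi_pos
    positivity
  · intro t
    rw [hderivS, hderivD, hD2_def]
    simp only
    rw [hEH t, hg_def]
end
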